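/- arXiv:1403.0012 — 7 statements merged into one kernel-verified Lean document; each statement's English description precedes it below -/
import Mathlib

section
/- For every δ ∈ (0,1) and all reals a > 0 and ρ > 0, the improper integral ∫_ρ^∞ (1 − e^{−a/x}) δ x^{δ−1} dx converges and equals a^δ γ(1−δ, a/ρ) − ρ^δ (1 − e^{−a/ρ}), where γ(a,z) := ∫_0^z t^{a−1} e^{−t} dt is the lower incomplete gamma function. -/
/-!
With `G x = x^δ (1 - e^{-a/x}) - a^δ γ(1-δ, a/x)` one has `G' x = (1 - e^{-a/x}) δ x^{δ-1}`:
differentiating `γ(1-δ, a/x)` produces `(a/x)^{-δ} e^{-a/x} (-a/x²)`, and `a^δ (a/x)^{-δ} = x^δ`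
makes this cancel the `e^{-a/x}` term of the product rule. The integrand is nonnegative and
`G x → 0` as `x → ∞` (the first term is `O(x^{δ-1})`, the second tends to `γ(1-δ, 0) = 0`),
so the integral over `(ρ, ∞)` converges and equals `-G ρ`.
-/

open MeasureTheory Real Set Filter Topology

/-- The lower incomplete gamma function `γ(a, z) = ∫_0^z t^(a-1) e^(-t) dt`. -/
noncomputable def lowerGamma (a z : ℝ) : ℝ := ∫ t in (0:ℝ)..z, t ^ (a - 1) * Real.exp (-t)

section LowerGamma

variable {s : ℝ}

lemma intervalIntegrable_lowerGamma_integrand (hs : 0 < s) (b c : ℝ) :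
    IntervalIntegrable (fun t : ℝ => t ^ (s - 1) * Real.exp (-t)) volume b c :=
  (intervalIntegral.intervalIntegrable_rpow' (by linarith)).mul_continuousOn
    (continuous_exp.comp continuous_neg).continuousOn

lemma hasDerivAt_lowerGamma (hs : 0 < s) {z : ℝ} (hz : z ≠ 0) :
    HasDerivAt (lowerGamma s) (z ^ (s - 1) * Real.exp (-z)) z :=
  intervalIntegral.integral_hasDerivAt_right (intervalIntegrable_lowerGamma_integrand hs 0 z)
    (Measurable.aestronglyMeasurable (by fun_prop)).stronglyMeasurableAtFilter
    ((continuousAt_rpow_const z _ (Or.inl hz)).mul (continuous_exp.comp continuous_neg).continuousAt)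

lemma continuous_lowerGamma (hs : 0 < s) : Continuous (lowerGamma s) :=
  intervalIntegral.continuous_primitive (intervalIntegrable_lowerGamma_integrand hs) 0

lemma tendsto_lowerGamma_const_div_atTop (hs : 0 < s) (a : ℝ) :
    Tendsto (fun x => lowerGamma s (a / x)) atTop (𝓝 0) := by
  have h := ((continuous_lowerGamma hs).tendsto 0).comp
    (tendsto_const_nhds (x := a) |>.div_atTop tendsto_id)
  rwa [lowerGamma, intervalIntegral.integral_same] at h

end LowerGamma

section Integrand

variable {δ a : ℝ}

lemma one_sub_exp_neg_div_nonneg (ha : 0 ≤ a) {x : ℝ} (hx : 0 ≤ x) : 0 ≤ 1 - Real.exp (-a / x) :=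
  sub_nonneg.2 (exp_le_one_iff.2 (div_nonpos_of_nonpos_of_nonneg (neg_nonpos.2 ha) hx))

lemma tendsto_rpow_mul_one_sub_exp_neg_div_atTop (hδ : δ < 1) (ha : 0 ≤ a) :
    Tendsto (fun x => x ^ δ * (1 - Real.exp (-a / x))) atTop (𝓝 0) := by
  have hbound : Tendsto (fun x : ℝ => a * x ^ (δ - 1)) atTop (𝓝 0) := by
    simpa using (tendsto_rpow_neg_atTop (y := 1 - δ) (by linarith)).const_mul a
      |>.congr fun x => by rw [neg_sub]
  refine squeeze_zero' ?_ ?_ hbound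
  · filter_upwards [eventually_ge_atTop 0] with x hx
    exact mul_nonneg (rpow_nonneg hx _) (one_sub_exp_neg_div_nonneg ha hx)
  · filter_upwards [eventually_gt_atTop 0] with x hx
    calc x ^ δ * (1 - Real.exp (-a / x)) ≤ x ^ δ * (a / x) := by
          gcongr
          linarith [add_one_le_exp (-a / x), neg_div x a]
      _ = a * x ^ (δ - 1) := by rw [rpow_sub hx, rpow_one]; ring

lemma hasDerivAt_rpow_mul_one_sub_exp_sub_lowerGamma (hδ : δ < 1) (ha : 0 < a) {x : ℝ}
    (hx : 0 < x) :
    HasDerivAt (fun x => x ^ δ * (1 - Real.exp (-a / x)) - a ^ δ * lowerGamma (1 - δ) (a / x))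
      ((1 - Real.exp (-a / x)) * δ * x ^ (δ - 1)) x := by
  have hax : 0 < a / x := div_pos ha hx
  have hdiv : HasDerivAt (fun y => a / y) (-(a / x ^ 2)) x := by
    simpa [div_eq_mul_inv] using (hasDerivAt_inv hx.ne').const_mul a
  have hexp : HasDerivAt (fun y => Real.exp (-a / y)) (Real.exp (-a / x) * (a / x ^ 2)) x := by
    simpa only [neg_div, neg_neg, Pi.neg_apply] using hdiv.neg.exp
  have hγ := (hasDerivAt_lowerGamma (s := 1 - δ) (by linarith) hax.ne').comp x hdiv
  have hcancel : a ^ δ * (a / x) ^ (1 - δ - 1) = x ^ δ := by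
    rw [sub_sub_cancel_left, rpow_neg hax.le, div_rpow ha.le hx.le]
    field_simp [(rpow_pos_of_pos ha δ).ne']
  refine (((hasDerivAt_rpow_const (p := δ) (Or.inl hx.ne')).fun_mul
    ((hasDerivAt_const x 1).fun_sub hexp)).fun_sub (hγ.const_mul (a ^ δ))).congr_deriv ?_
  rw [neg_div]
  linear_combination (Real.exp (-(a / x)) * (a / x ^ 2)) * hcancel

end Integrand

/-- For `δ ∈ (0,1)`, `a > 0`, `ρ > 0`, the improper integral
`∫_ρ^∞ (1 − e^{−a/x}) δ x^{δ−1} dx` converges and equals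
`a^δ γ(1−δ, a/ρ) − ρ^δ (1 − e^{−a/ρ})`. -/
theorem stmt_0 (δ a ρ : ℝ) (hδ : δ ∈ Set.Ioo (0:ℝ) 1) (ha : 0 < a) (hρ : 0 < ρ) :
    IntegrableOn (fun x : ℝ => (1 - Real.exp (-a / x)) * δ * x ^ (δ - 1)) (Set.Ioi ρ) ∧
    ∫ x in Set.Ioi ρ, (1 - Real.exp (-a / x)) * δ * x ^ (δ - 1)
      = a ^ δ * lowerGamma (1 - δ) (a / ρ) - ρ ^ δ * (1 - Real.exp (-a / ρ)) := by
  obtain ⟨hδ0, hδ1⟩ := hδ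
  have hderiv : ∀ x ∈ Ici ρ, HasDerivAt
      (fun x => x ^ δ * (1 - Real.exp (-a / x)) - a ^ δ * lowerGamma (1 - δ) (a / x))
      ((1 - Real.exp (-a / x)) * δ * x ^ (δ - 1)) x := fun x hx =>
    hasDerivAt_rpow_mul_one_sub_exp_sub_lowerGamma hδ1 ha (hρ.trans_le hx)
  have hnonneg : ∀ x ∈ Ioi ρ, 0 ≤ (1 - Real.exp (-a / x)) * δ * x ^ (δ - 1) := fun x hx =>
    have hx0 : 0 ≤ x := hρ.le.trans hx.le
    mul_nonneg (mul_nonneg (one_sub_exp_neg_div_nonneg ha.le hx0) hδ0.le) (rpow_nonneg hx0 _)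
  have hlim : Tendsto
      (fun x => x ^ δ * (1 - Real.exp (-a / x)) - a ^ δ * lowerGamma (1 - δ) (a / x))
      atTop (𝓝 0) := by
    simpa using (tendsto_rpow_mul_one_sub_exp_neg_div_atTop hδ1 ha.le).sub
      ((tendsto_lowerGamma_const_div_atTop (by linarith) a).const_mul (a ^ δ))
  refine ⟨integrableOn_Ioi_deriv_of_nonneg' hderiv hnonneg hlim, ?_⟩
  rw [integral_Ioi_of_hasDerivAt_of_nonneg' hderiv hnonneg hlim]
  ring
end

section
/- For every δ ∈ (0,1) and every real s > 0, ∫_0^∞ e^{−x} ( (sx)^δ γ(1−δ, sx) + e^{−sx} − 1 ) dx = s δ ∫_0^1 t^{−δ} (1+st)^{−1} dt, where γ(a,z) := ∫_0^z t^{a−1} e^{−t} dt is the lower incomplete gamma function; in particular both integrals converge. -/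
open MeasureTheory Real Set

/-!
Substituting `t = c u` in `γ(1 - δ, c)` and writing `e^{-c} - 1 = -c ∫_0^1 e^{-c u} du` gives
`c^δ γ(1 - δ, c) + e^{-c} - 1 = c ∫_0^1 (u^{-δ} - 1) e^{-c u} du`. With `c = s x` the resulting
double integral over `(0, ∞) × (0, 1)` converges absolutely, so by Fubini the `x`-integral may be
done first; it equals `s (u^{-δ} - 1) / (1 + s u)^2`. Finally `(u^{1-δ} - u) / (1 + s u)` vanishes
at both ends of `[0, 1]` and its derivative is `(u^{-δ} - 1) / (1 + s u)^2 - δ u^{-δ} / (1 + s u)`,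
which is the integration by parts producing the factor `δ`.
-/

lemma integrableOn_Ioo_rpow_mul {a : ℝ} (ha : -1 < a) {φ : ℝ → ℝ}
    (hφ : ContinuousOn φ (Icc 0 1)) :
    IntegrableOn (fun u : ℝ => u ^ a * φ u) (Ioo 0 1) :=
  ((intervalIntegral.integrableOn_Ioo_rpow_iff one_pos).2 ha).mul_continuousOn_of_subset hφ
    measurableSet_Ioo isCompact_Icc Ioo_subset_Icc_self

lemma integrableOn_Ioo_rpow_sub_one_mul {a : ℝ} (ha : -1 < a) {φ : ℝ → ℝ}
    (hφ : ContinuousOn φ (Icc 0 1)) :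
    IntegrableOn (fun u : ℝ => (u ^ a - 1) * φ u) (Ioo 0 1) := by
  refine ((integrableOn_Ioo_rpow_mul ha hφ).sub
    (hφ.integrableOn_Icc.mono_set Ioo_subset_Icc_self)).congr_fun (fun u _ => ?_) measurableSet_Ioo
  simp only [Pi.sub_apply]
  ring

lemma lowerGamma_eq_rpow_mul_integral (a : ℝ) {c : ℝ} (hc : 0 < c) :
    lowerGamma a c = c ^ a * ∫ u in Ioo (0:ℝ) 1, u ^ (a - 1) * exp (-(c * u)) := by
  have hscale := intervalIntegral.mul_integral_comp_mul_left (a := 0) (b := 1)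
    (f := fun t => t ^ (a - 1) * exp (-t)) c
  simp only [mul_zero, mul_one] at hscale
  have hca : c ^ a = c * c ^ (a - 1) := by rw [rpow_sub_one hc.ne']; field_simp
  rw [lowerGamma, ← hscale, intervalIntegral.integral_of_le zero_le_one,
    integral_Ioc_eq_integral_Ioo, hca, mul_assoc, ← integral_const_mul (c ^ (a - 1))]
  congr 1
  refine setIntegral_congr_fun measurableSet_Ioo fun u (hu : u ∈ Ioo 0 1) => ?_
  rw [mul_rpow hc.le hu.1.le]
  ring

lemma exp_neg_sub_one_eq_neg_mul_integral (c : ℝ) :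
    exp (-c) - 1 = -(c * ∫ u in Ioo (0:ℝ) 1, exp (-(c * u))) := by
  have hscale := intervalIntegral.mul_integral_comp_mul_left (a := 0) (b := 1)
    (f := fun t => exp (-t)) c
  simp only [mul_zero, mul_one] at hscale
  rw [← integral_Ioc_eq_integral_Ioo, ← intervalIntegral.integral_of_le zero_le_one, hscale,
    intervalIntegral.integral_comp_neg (fun t => exp t), integral_exp]
  simp

lemma rpow_mul_lowerGamma_one_sub_add_exp_neg_sub_one {δ c : ℝ} (hδ : δ < 1) (hc : 0 < c) :
    c ^ δ * lowerGamma (1 - δ) c + exp (-c) - 1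
      = c * ∫ u in Ioo (0:ℝ) 1, (u ^ (-δ) - 1) * exp (-(c * u)) := by
  have hexp : ContinuousOn (fun u => exp (-(c * u))) (Icc 0 1) := by fun_prop
  rw [lowerGamma_eq_rpow_mul_integral _ hc, add_sub_assoc, exp_neg_sub_one_eq_neg_mul_integral,
    ← mul_assoc, ← rpow_add hc, add_sub_cancel, rpow_one, sub_sub_cancel_left]
  simp_rw [sub_mul, one_mul]
  rw [integral_sub (integrableOn_Ioo_rpow_mul (by linarith) hexp)
    (hexp.integrableOn_Icc.mono_set Ioo_subset_Icc_self)]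
  ring

lemma integrable_prod_exp_mul_rpow_sub_one {δ s : ℝ} (hδ : δ < 1) (hs : 0 ≤ s) :
    Integrable (Function.uncurry fun x u : ℝ =>
        exp (-x) * (s * x) * ((u ^ (-δ) - 1) * exp (-(s * x * u))))
      ((volume.restrict (Ioi 0)).prod (volume.restrict (Ioo 0 1))) := by
  have hx : IntegrableOn (fun x : ℝ => exp (-x) * (s * x)) (Ioi 0) := by
    refine IntegrableOn.congr_fun ((GammaIntegral_convergent two_pos).const_mul s) (fun x _ => ?_)
      measurableSet_Ioi
    rw [show (2:ℝ) - 1 = 1 by norm_num, rpow_one]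
    ring
  have hu : IntegrableOn (fun u : ℝ => u ^ (-δ) - 1) (Ioo 0 1) := by
    simpa using integrableOn_Ioo_rpow_sub_one_mul (φ := fun _ => 1) (by linarith)
      continuousOn_const
  refine (hx.mul_prod hu).norm.mono' (by unfold Function.uncurry; fun_prop) ?_
  rw [Measure.prod_restrict]
  filter_upwards [ae_restrict_mem (measurableSet_Ioi.prod measurableSet_Ioo)]
    with ⟨x, u⟩ ⟨hx0, hu0, _⟩
  have hdecay : ‖exp (-(s * x * u))‖ ≤ 1 := by
    rw [norm_eq_abs, abs_exp, exp_le_one_iff, neg_nonpos]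
    exact mul_nonneg (mul_nonneg hs (le_of_lt hx0)) (le_of_lt hu0)
  simp only [Function.uncurry, norm_mul]
  gcongr
  exact mul_le_of_le_one_right (norm_nonneg _) hdecay

lemma integral_Ioi_mul_exp_neg_mul {r : ℝ} (hr : 0 < r) :
    ∫ x in Ioi (0:ℝ), x * exp (-(r * x)) = (r ^ 2)⁻¹ := by
  have h := integral_rpow_mul_exp_neg_mul_Ioi two_pos hr
  norm_num [Gamma_two] at h
  exact h

lemma integral_Ioi_exp_mul_rpow_sub_one {δ s u : ℝ} (hs : 0 ≤ s) (hu : 0 ≤ u) :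
    ∫ x in Ioi (0:ℝ), exp (-x) * (s * x) * ((u ^ (-δ) - 1) * exp (-(s * x * u)))
      = s * (u ^ (-δ) - 1) * ((1 + s * u) ^ 2)⁻¹ := by
  calc _ = ∫ x in Ioi (0:ℝ), s * (u ^ (-δ) - 1) * (x * exp (-((1 + s * u) * x))) := by
        congr 1; ext x
        rw [show -((1 + s * u) * x) = -x + -(s * x * u) by ring, exp_add]
        ring
    _ = _ := by rw [integral_const_mul, integral_Ioi_mul_exp_neg_mul (by positivity)]

lemma hasDerivAt_rpow_one_sub_sub_mul_inv {δ s u : ℝ} (hu : 0 < u) (hsu : 0 < 1 + s * u) :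
    HasDerivAt (fun v => (v ^ (1 - δ) - v) * (1 + s * v)⁻¹)
      ((u ^ (-δ) - 1) * ((1 + s * u) ^ 2)⁻¹ - δ * (u ^ (-δ) * (1 + s * u)⁻¹)) u := by
  have hnum : HasDerivAt (fun v : ℝ => v ^ (1 - δ) - v) ((1 - δ) * u ^ (-δ) - 1) u := by
    have := (hasDerivAt_rpow_const (p := 1 - δ) (Or.inl hu.ne')).sub (hasDerivAt_id u)
    rwa [sub_sub_cancel_left] at this
  have hden : HasDerivAt (fun v : ℝ => 1 + s * v) s u := by
    simpa using ((hasDerivAt_id u).const_mul s).const_add 1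
  refine (hnum.mul (hden.inv hsu.ne')).congr_deriv ?_
  rw [show (1 : ℝ) - δ = 1 + -δ by ring, rpow_add hu, rpow_one]
  simp only [Pi.inv_apply]
  field_simp
  ring

lemma integral_rpow_sub_one_mul_inv_sq {δ s : ℝ} (hδ : δ < 1) (hs : 0 ≤ s) :
    ∫ u in Ioo (0:ℝ) 1, (u ^ (-δ) - 1) * ((1 + s * u) ^ 2)⁻¹
      = δ * ∫ u in Ioo (0:ℝ) 1, u ^ (-δ) * (1 + s * u)⁻¹ := by
  have hpos : ∀ u ∈ Icc (0:ℝ) 1, 0 < 1 + s * u := fun u hu => by nlinarith [hu.1]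
  have hV : IntegrableOn (fun u : ℝ => (u ^ (-δ) - 1) * ((1 + s * u) ^ 2)⁻¹) (Ioo 0 1) :=
    integrableOn_Ioo_rpow_sub_one_mul (by linarith)
      (ContinuousOn.inv₀ (by fun_prop) fun u hu => (pow_pos (hpos u hu) 2).ne')
  have hW : IntegrableOn (fun u : ℝ => u ^ (-δ) * (1 + s * u)⁻¹) (Ioo 0 1) :=
    integrableOn_Ioo_rpow_mul (by linarith)
      (ContinuousOn.inv₀ (by fun_prop) fun u hu => (hpos u hu).ne')
  have hcont : ContinuousOn (fun v : ℝ => (v ^ (1 - δ) - v) * (1 + s * v)⁻¹) (Icc 0 1) :=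
    ((continuousOn_id.rpow_const fun _ _ => Or.inr (by linarith)).sub continuousOn_id).mul
      (ContinuousOn.inv₀ (by fun_prop) fun u hu => (hpos u hu).ne')
  have hftc := intervalIntegral.integral_eq_sub_of_hasDeriv_right_of_le zero_le_one hcont
    (fun u hu => (hasDerivAt_rpow_one_sub_sub_mul_inv hu.1
      (hpos u (Ioo_subset_Icc_self hu))).hasDerivWithinAt)
    ((intervalIntegrable_iff_integrableOn_Ioo_of_le zero_le_one).2 (hV.sub (hW.const_mul δ)))
  rw [intervalIntegral.integral_of_le zero_le_one, integral_Ioc_eq_integral_Ioo,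
    integral_sub hV (hW.const_mul δ), integral_const_mul,
    zero_rpow (by linarith : (1:ℝ) - δ ≠ 0)] at hftc
  simpa [sub_eq_zero] using hftc

/-- For `δ ∈ (0,1)` and `s > 0`,
`∫_0^∞ e^{−x} ( (sx)^δ γ(1−δ, sx) + e^{−sx} − 1 ) dx = s δ ∫_0^1 t^{−δ} (1+st)^{−1} dt`,
and in particular both integrals converge. -/
theorem stmt_1 (δ s : ℝ) (hδ : δ ∈ Set.Ioo (0:ℝ) 1) (hs : 0 < s) :
    IntegrableOn (fun x : ℝ =>
        Real.exp (-x) * ((s * x) ^ δ * lowerGamma (1 - δ) (s * x) + Real.exp (-(s * x)) - 1))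
      (Set.Ioi 0) ∧
    IntegrableOn (fun t : ℝ => t ^ (-δ) * (1 + s * t)⁻¹) (Set.Ioo 0 1) ∧
    ∫ x in Set.Ioi 0,
        Real.exp (-x) * ((s * x) ^ δ * lowerGamma (1 - δ) (s * x) + Real.exp (-(s * x)) - 1)
      = s * δ * ∫ t in Set.Ioo (0:ℝ) 1, t ^ (-δ) * (1 + s * t)⁻¹ := by
  obtain ⟨-, hδ1⟩ := hδ
  have hF := integrable_prod_exp_mul_rpow_sub_one hδ1 hs.le
  have hinner : EqOn (fun x : ℝ =>
        exp (-x) * ((s * x) ^ δ * lowerGamma (1 - δ) (s * x) + exp (-(s * x)) - 1))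
      (fun x => ∫ u in Ioo (0:ℝ) 1,
        exp (-x) * (s * x) * ((u ^ (-δ) - 1) * exp (-(s * x * u)))) (Ioi 0) := fun x hx => by
    dsimp only
    rw [rpow_mul_lowerGamma_one_sub_add_exp_neg_sub_one hδ1 (mul_pos hs hx), ← mul_assoc,
      ← integral_const_mul]
  refine ⟨IntegrableOn.congr_fun hF.integral_prod_left hinner.symm measurableSet_Ioi,
    integrableOn_Ioo_rpow_mul (by linarith)
      (ContinuousOn.inv₀ (by fun_prop) fun u hu => by nlinarith [hu.1]), ?_⟩
  calc _ = ∫ x in Ioi (0:ℝ), ∫ u in Ioo (0:ℝ) 1,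
          exp (-x) * (s * x) * ((u ^ (-δ) - 1) * exp (-(s * x * u))) :=
        setIntegral_congr_fun measurableSet_Ioi hinner
    _ = ∫ u in Ioo (0:ℝ) 1, ∫ x in Ioi (0:ℝ),
          exp (-x) * (s * x) * ((u ^ (-δ) - 1) * exp (-(s * x * u))) :=
        integral_integral_swap hF
    _ = ∫ u in Ioo (0:ℝ) 1, s * (u ^ (-δ) - 1) * ((1 + s * u) ^ 2)⁻¹ :=
        setIntegral_congr_fun measurableSet_Ioo fun u hu =>
          integral_Ioi_exp_mul_rpow_sub_one hs.le hu.1.le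
    _ = s * δ * ∫ t in Ioo (0:ℝ) 1, t ^ (-δ) * (1 + s * t)⁻¹ := by
        simp_rw [mul_assoc s]
        rw [integral_const_mul, integral_rpow_sub_one_mul_inv_sq hδ1 hs.le]
end

section
/- For every δ ∈ (0,1) and every real κ ≥ 1, lim_{s→0⁺} (C_κ(s,1) − 1)/s = δ/(κ(1−δ)). -/
/-! With `a = 1/(1+s)`,
`(C₁(s,1) − 1)/s = −(1+s)⁻¹ + s^{δ−1} ∫_a^1 y^δ (1−y)^{−δ} dy`.
On `[a,1]` the factor `y^δ` lies between `a^δ` and `1`, and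
`∫_a^1 (1−y)^{−δ} dy = (1−a)^{1−δ}/(1−δ) = (s/(1+s))^{1−δ}/(1−δ)`.
So `s^{δ−1}` times the integral is squeezed between `(1+s)⁻¹/(1−δ)` and
`(1+s)^{δ−1}/(1−δ)`, both tending to `1/(1−δ)`, whence
`(C₁(s,1) − 1)/s → −1 + 1/(1−δ) = δ/(1−δ)`; and `C_κ(s,1) − 1 = (C₁(s,1) − 1)/κ`. -/

open MeasureTheory Real Set Filter

/-- `C₁(s,m) := (1+s)^{−m} + m s^δ ∫_{1/(1+s)}^1 y^{m+δ−1} (1−y)^{−δ} dy`. -/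
noncomputable def C1 (δ s : ℝ) (m : ℕ) : ℝ :=
  (1 + s) ^ (-(m : ℝ)) +
    m * s ^ δ * ∫ y in (1 / (1 + s))..1, y ^ ((m : ℝ) + δ - 1) * (1 - y) ^ (-δ)

/-- `C_κ(s,m) := (κ−1)/κ + C₁(s,m)/κ`. -/
noncomputable def Cκ (δ κ s : ℝ) (m : ℕ) : ℝ := (κ - 1) / κ + C1 δ s m / κ

open Topology

noncomputable def tailIntegral (δ a : ℝ) : ℝ := ∫ y in a..1, y ^ δ * (1 - y) ^ (-δ)

lemma integral_one_sub_rpow_neg {δ : ℝ} (hδ : δ < 1) (a : ℝ) :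
    ∫ y in a..1, (1 - y) ^ (-δ) = (1 - a) ^ (1 - δ) / (1 - δ) := by
  rw [intervalIntegral.integral_comp_sub_left (fun x => x ^ (-δ)) 1,
    integral_rpow (Or.inl (by linarith)), sub_self, zero_rpow (by linarith)]
  ring_nf

lemma intervalIntegrable_one_sub_rpow_neg {δ : ℝ} (hδ : δ < 1) (a : ℝ) :
    IntervalIntegrable (fun y => (1 - y) ^ (-δ)) volume a 1 := by
  simpa using (intervalIntegral.intervalIntegrable_rpow' (r := -δ) (by linarith)
    (a := 1 - a) (b := 0)).comp_sub_left 1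

lemma intervalIntegrable_rpow_mul_one_sub_rpow_neg {δ : ℝ} (hδ₀ : 0 ≤ δ) (hδ₁ : δ < 1)
    (a : ℝ) :
    IntervalIntegrable (fun y => y ^ δ * (1 - y) ^ (-δ)) volume a 1 :=
  (intervalIntegrable_one_sub_rpow_neg hδ₁ a).continuousOn_mul
    (continuous_rpow_const hδ₀).continuousOn

lemma tailIntegral_le {δ a : ℝ} (hδ₀ : 0 ≤ δ) (hδ₁ : δ < 1) (ha₀ : 0 ≤ a)
    (ha₁ : a ≤ 1) :
    tailIntegral δ a ≤ (1 - a) ^ (1 - δ) / (1 - δ) := by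
  rw [tailIntegral, ← integral_one_sub_rpow_neg hδ₁ a]
  refine intervalIntegral.integral_mono_on ha₁
    (intervalIntegrable_rpow_mul_one_sub_rpow_neg hδ₀ hδ₁ a)
    (intervalIntegrable_one_sub_rpow_neg hδ₁ a) fun y hy => ?_
  exact mul_le_of_le_one_left (rpow_nonneg (by linarith [hy.2]) _)
    (rpow_le_one (ha₀.trans hy.1) hy.2 hδ₀)

lemma le_tailIntegral {δ a : ℝ} (hδ₀ : 0 ≤ δ) (hδ₁ : δ < 1) (ha₀ : 0 ≤ a)
    (ha₁ : a ≤ 1) :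
    a ^ δ * ((1 - a) ^ (1 - δ) / (1 - δ)) ≤ tailIntegral δ a := by
  rw [tailIntegral, ← integral_one_sub_rpow_neg hδ₁ a, ← intervalIntegral.integral_const_mul]
  refine intervalIntegral.integral_mono_on ha₁
    ((intervalIntegrable_one_sub_rpow_neg hδ₁ a).const_mul _)
    (intervalIntegrable_rpow_mul_one_sub_rpow_neg hδ₀ hδ₁ a) fun y hy => ?_
  exact mul_le_mul_of_nonneg_right (rpow_le_rpow ha₀ hy.1 hδ₀)
    (rpow_nonneg (by linarith [hy.2]) _)

lemma rpow_sub_one_mul_div_one_add_rpow {s : ℝ} (hs : 0 < s) (δ : ℝ) :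
    s ^ (δ - 1) * (s / (1 + s)) ^ (1 - δ) = (1 + s) ^ (δ - 1) := by
  rw [div_rpow hs.le (by positivity), mul_div_assoc', ← rpow_add hs, div_eq_iff (by positivity),
    ← rpow_add (by positivity)]
  norm_num

lemma tendsto_one_add_rpow_nhdsGT_zero (p : ℝ) :
    Tendsto (fun s : ℝ => (1 + s) ^ p) (𝓝[>] 0) (𝓝 1) := by
  have : ContinuousAt (fun s : ℝ => (1 + s) ^ p) 0 :=
    (continuousAt_const.add continuousAt_id).rpow_const (Or.inl (by norm_num))
  simpa using this.tendsto.mono_left nhdsWithin_le_nhds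

lemma C1_one_sub_one_div {δ s : ℝ} (hs : 0 < s) :
    (C1 δ s 1 - 1) / s =
      -(1 + s) ^ (-1 : ℝ) + s ^ (δ - 1) * tailIntegral δ (1 / (1 + s)) := by
  simp only [C1, tailIntegral, Nat.cast_one, one_mul, add_sub_cancel_left, rpow_sub hs, rpow_one,
    rpow_neg_one]
  field_simp
  ring

lemma rpow_sub_one_mul_tailIntegral_mem_Icc {δ s : ℝ} (hδ₀ : 0 ≤ δ) (hδ₁ : δ < 1)
    (hs : 0 < s) :
    s ^ (δ - 1) * tailIntegral δ (1 / (1 + s)) ∈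
      Icc ((1 + s) ^ (-1 : ℝ) / (1 - δ)) ((1 + s) ^ (δ - 1) / (1 - δ)) := by
  have hs₁ : 0 < 1 + s := by linarith
  have ha₀ : 0 ≤ 1 / (1 + s) := by positivity
  have ha₁ : 1 / (1 + s) ≤ 1 := div_le_one_of_le₀ (by linarith) hs₁.le
  have h1a : 1 - 1 / (1 + s) = s / (1 + s) := by rw [one_sub_div hs₁.ne', add_sub_cancel_left]
  have hsδ : 0 ≤ s ^ (δ - 1) := rpow_nonneg hs.le _
  constructor
  · calc (1 + s) ^ (-1 : ℝ) / (1 - δ)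
        = (1 / (1 + s)) ^ δ * (s ^ (δ - 1) * (s / (1 + s)) ^ (1 - δ)) / (1 - δ) := by
          rw [rpow_sub_one_mul_div_one_add_rpow hs, one_div, inv_rpow hs₁.le,
            ← rpow_neg hs₁.le, ← rpow_add hs₁]
          ring_nf
      _ = s ^ (δ - 1) * ((1 / (1 + s)) ^ δ * ((1 - 1 / (1 + s)) ^ (1 - δ) / (1 - δ))) := by
          rw [h1a]
          ring
      _ ≤ _ := mul_le_mul_of_nonneg_left (le_tailIntegral hδ₀ hδ₁ ha₀ ha₁) hsδ
  · calc s ^ (δ - 1) * tailIntegral δ (1 / (1 + s))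
        ≤ s ^ (δ - 1) * ((1 - 1 / (1 + s)) ^ (1 - δ) / (1 - δ)) :=
          mul_le_mul_of_nonneg_left (tailIntegral_le hδ₀ hδ₁ ha₀ ha₁) hsδ
      _ = (1 + s) ^ (δ - 1) / (1 - δ) := by
          rw [h1a, mul_div_assoc', rpow_sub_one_mul_div_one_add_rpow hs]

lemma tendsto_rpow_sub_one_mul_tailIntegral {δ : ℝ} (hδ₀ : 0 ≤ δ) (hδ₁ : δ < 1) :
    Tendsto (fun s : ℝ => s ^ (δ - 1) * tailIntegral δ (1 / (1 + s)))
      (𝓝[>] 0) (𝓝 (1 / (1 - δ))) :=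
  tendsto_of_tendsto_of_tendsto_of_le_of_le'
    ((tendsto_one_add_rpow_nhdsGT_zero (-1)).div_const _)
    ((tendsto_one_add_rpow_nhdsGT_zero (δ - 1)).div_const _)
    (eventually_nhdsWithin_of_forall fun _ hs =>
      (rpow_sub_one_mul_tailIntegral_mem_Icc hδ₀ hδ₁ hs).1)
    (eventually_nhdsWithin_of_forall fun _ hs =>
      (rpow_sub_one_mul_tailIntegral_mem_Icc hδ₀ hδ₁ hs).2)

lemma tendsto_C1_one_sub_one_div {δ : ℝ} (hδ₀ : 0 ≤ δ) (hδ₁ : δ < 1) :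
    Tendsto (fun s : ℝ => (C1 δ s 1 - 1) / s) (𝓝[>] 0) (𝓝 (δ / (1 - δ))) := by
  have hlim : δ / (1 - δ) = -1 + 1 / (1 - δ) := by
    field_simp [(sub_pos.2 hδ₁).ne']
    ring
  rw [hlim]
  refine (((tendsto_one_add_rpow_nhdsGT_zero (-1)).neg).add
    (tendsto_rpow_sub_one_mul_tailIntegral hδ₀ hδ₁)).congr' ?_
  filter_upwards [self_mem_nhdsWithin] with s hs
  exact (C1_one_sub_one_div hs).symm

/-- For `δ ∈ (0,1)` and `κ ≥ 1`, `lim_{s→0⁺} (C_κ(s,1) − 1)/s = δ/(κ(1−δ))`. -/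
theorem stmt_3 (δ κ : ℝ) (hδ : δ ∈ Set.Ioo (0:ℝ) 1) (hκ : 1 ≤ κ) :
    Tendsto (fun s : ℝ => (Cκ δ κ s 1 - 1) / s) (nhdsWithin 0 (Set.Ioi 0))
      (nhds (δ / (κ * (1 - δ)))) := by
  have hκ₀ : κ ≠ 0 := (one_pos.trans_le hκ).ne'
  have hCκ : ∀ s, (Cκ δ κ s 1 - 1) / s = (C1 δ s 1 - 1) / s / κ := fun s => by
    simp only [Cκ]
    field_simp
    ring
  simp_rw [hCκ, mul_comm κ, ← div_div]
  exact (tendsto_C1_one_sub_one_div hδ.1.le hδ.2).div_const κ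
end

section
/- Fix δ ∈ (0,1) and a positive integer m. Then lim_{θ→∞} θ^δ / C₁(θ,m) = Γ(m) / (Γ(1−δ) Γ(m+δ)), where Γ is the Gamma function. -/
/-!
For `θ > 0`, `C₁(θ,m) / θ^δ = (1+θ)^{-m} θ^{-δ} + m ∫_{1/(1+θ)}^1 y^{m+δ-1} (1-y)^{-δ} dy`.
The first term tends to `0`, and since the integrand is integrable on `[0,1]` the integral tends
to the Beta integral `B(m+δ, 1-δ) = Γ(m+δ) Γ(1-δ) / Γ(m+1)`. Taking reciprocals and using
`Γ(m+1) = m Γ(m)` gives the limit.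
-/

open MeasureTheory Real Set Filter

open Topology

lemma ofReal_rpow_mul_one_sub_rpow {x : ℝ} (hx : x ∈ uIcc (0 : ℝ) 1) (a b : ℝ) :
    ((x ^ (a - 1) * (1 - x) ^ (b - 1) : ℝ) : ℂ) =
      (x : ℂ) ^ ((a : ℂ) - 1) * (1 - (x : ℂ)) ^ ((b : ℂ) - 1) := by
  rw [uIcc_of_le zero_le_one] at hx
  push_cast [Complex.ofReal_cpow hx.1, Complex.ofReal_cpow (sub_nonneg.2 hx.2)]
  rfl

lemma intervalIntegrable_rpow_mul_one_sub_rpow {a b : ℝ} (ha : 0 < a) (hb : 0 < b) :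
    IntervalIntegrable (fun x : ℝ => x ^ (a - 1) * (1 - x) ^ (b - 1)) volume 0 1 := by
  have hC := Complex.betaIntegral_convergent (u := a) (v := b) (by simpa) (by simpa)
  have hC' : IntervalIntegrable
      (fun x : ℝ => ((x ^ (a - 1) * (1 - x) ^ (b - 1) : ℝ) : ℂ)) volume 0 1 :=
    hC.congr_ae <| (ae_restrict_iff' measurableSet_uIoc).2 <| ae_of_all _ fun x hx =>
      (ofReal_rpow_mul_one_sub_rpow (uIoc_subset_uIcc hx) a b).symm
  rw [intervalIntegrable_iff] at hC' ⊢
  exact hC'.re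

lemma integral_rpow_mul_one_sub_rpow {a b : ℝ} (ha : 0 < a) (hb : 0 < b) :
    ∫ x in (0 : ℝ)..1, x ^ (a - 1) * (1 - x) ^ (b - 1) = Gamma a * Gamma b / Gamma (a + b) := by
  have h := Complex.betaIntegral_eq_Gamma_mul_div a b (by simpa) (by simpa)
  rw [Complex.betaIntegral, ← intervalIntegral.integral_congr
    (fun x hx => ofReal_rpow_mul_one_sub_rpow hx a b), intervalIntegral.integral_ofReal,
    ← Complex.ofReal_add, Complex.Gamma_ofReal, Complex.Gamma_ofReal, Complex.Gamma_ofReal] at h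
  exact_mod_cast h

lemma tendsto_one_div_one_add_atTop :
    Tendsto (fun θ : ℝ => 1 / (1 + θ)) atTop (𝓝[uIcc 0 1] 0) := by
  refine tendsto_nhdsWithin_iff.2 ⟨?_, ?_⟩
  · simpa only [one_div, Function.comp_def, id] using
      tendsto_inv_atTop_zero.comp (tendsto_atTop_add_const_left atTop 1 tendsto_id)
  · filter_upwards [eventually_ge_atTop 0] with θ hθ
    rw [uIcc_of_le zero_le_one]
    exact ⟨by positivity, (div_le_one (by linarith)).2 (by linarith)⟩

lemma tendsto_integral_one_div_one_add_atTop {f : ℝ → ℝ}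
    (hf : IntervalIntegrable f volume 0 1) :
    Tendsto (fun θ : ℝ => ∫ y in (1 / (1 + θ))..1, f y) atTop (𝓝 (∫ y in (0 : ℝ)..1, f y)) :=
  ((intervalIntegral.continuousOn_primitive_interval_left
    ((intervalIntegrable_iff').1 hf)) 0 left_mem_uIcc).tendsto.comp
    tendsto_one_div_one_add_atTop

lemma C1_div_rpow {δ θ : ℝ} (hθ : 0 < θ) (m : ℕ) :
    C1 δ θ m / θ ^ δ = (1 + θ) ^ (-(m : ℝ)) * θ ^ (-δ) +
      m * ∫ y in (1 / (1 + θ))..1, y ^ ((m : ℝ) + δ - 1) * (1 - y) ^ (-δ) := by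
  have hθδ : θ ^ δ ≠ 0 := (rpow_pos_of_pos hθ δ).ne'
  rw [C1, add_div, rpow_neg hθ.le, div_eq_mul_inv]
  field_simp

lemma tendsto_C1_div_rpow {δ : ℝ} (hδ : δ ∈ Ioo (0 : ℝ) 1) (m : ℕ) :
    Tendsto (fun θ : ℝ => C1 δ θ m / θ ^ δ) atTop
      (𝓝 (m * (Gamma (m + δ) * Gamma (1 - δ) / Gamma (m + 1)))) := by
  obtain ⟨hδ0, hδ1⟩ := hδ
  have ha : 0 < (m : ℝ) + δ := by linarith [(m.cast_nonneg : (0 : ℝ) ≤ m)]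
  have hb : 0 < 1 - δ := by linarith
  have hint := intervalIntegrable_rpow_mul_one_sub_rpow ha hb
  have hbeta := integral_rpow_mul_one_sub_rpow ha hb
  rw [show 1 - δ - 1 = -δ by ring] at hint hbeta
  rw [show (m : ℝ) + δ + (1 - δ) = m + 1 by ring] at hbeta
  have hvanish : Tendsto (fun θ : ℝ => (1 + θ) ^ (-(m : ℝ)) * θ ^ (-δ)) atTop (𝓝 0) := by
    refine squeeze_zero' ?_ ?_ (tendsto_rpow_neg_atTop hδ0)
    · filter_upwards [eventually_ge_atTop 0] with θ hθ
      positivity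
    · filter_upwards [eventually_ge_atTop 0] with θ hθ
      exact mul_le_of_le_one_left (by positivity)
        (rpow_le_one_of_one_le_of_nonpos (by linarith) (by simp))
  have := hvanish.add ((tendsto_integral_one_div_one_add_atTop hint).const_mul (m : ℝ))
  rw [zero_add, hbeta] at this
  exact this.congr' <| (eventually_gt_atTop 0).mono fun θ hθ => (C1_div_rpow hθ m).symm

/-- For `δ ∈ (0,1)` and a positive integer `m`,
`lim_{θ→∞} θ^δ / C₁(θ,m) = Γ(m) / (Γ(1−δ) Γ(m+δ))`. -/
theorem stmt_9 (δ : ℝ) (m : ℕ) (hδ : δ ∈ Set.Ioo (0:ℝ) 1) (hm : 0 < m) :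
    Tendsto (fun θ : ℝ => θ ^ δ / C1 δ θ m) atTop
      (nhds (Real.Gamma m / (Real.Gamma (1 - δ) * Real.Gamma (m + δ)))) := by
  have hm' : (0 : ℝ) < m := Nat.cast_pos.2 hm
  have hΓm := Gamma_pos_of_pos hm'
  have hΓ₁ := Gamma_pos_of_pos (show 0 < 1 - δ by linarith [hδ.2])
  have hΓ₂ := Gamma_pos_of_pos (show 0 < (m : ℝ) + δ by linarith [hδ.1])
  have hΓm₁ := Gamma_pos_of_pos (show 0 < (m : ℝ) + 1 by linarith)
  have hpos : 0 < (m : ℝ) * (Gamma (m + δ) * Gamma (1 - δ) / Gamma (m + 1)) := by positivity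
  have hlim : (m * (Gamma (m + δ) * Gamma (1 - δ) / Gamma (m + 1)))⁻¹ =
      Gamma m / (Gamma (1 - δ) * Gamma (m + δ)) := by
    rw [Gamma_add_one hm'.ne']
    field_simp
  simpa only [inv_div, hlim] using (tendsto_C1_div_rpow hδ m).inv₀ hpos.ne'
end

section
/- Fix δ ∈ (0,1) and a positive integer M. For θ > 0 define P(θ) := Σ_{m=1}^M (−1)^{m+1} (M choose m) / C₁(θ,m). Then lim_{θ→∞} θ^δ P(θ) = b_M, where b_M := Σ_{m=1}^M (−1)^{m+1} (M choose m) Γ(m) / (Γ(1−δ) Γ(m+δ)) and Γ is the Gamma function. -/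
/-!
For `θ > 0`, `C₁(θ,m) = θ^δ (θ^{-δ}(1+θ)^{-m} + m ∫_{1/(1+θ)}^1 y^{m+δ-1}(1-y)^{-δ} dy)`, and as
`θ → ∞` the bracket tends to `m · B(m+δ, 1-δ) = Γ(m+δ)Γ(1-δ)/Γ(m)`. So each `θ^δ / C₁(θ,m)`
converges to `Γ(m)/(Γ(1-δ)Γ(m+δ))`, and the finite alternating sum passes to the limit termwise.
-/

open MeasureTheory Real Set Filter

open ProbabilityTheory Topology

lemma betaIntegral_ofReal (p q : ℝ) :
    Complex.betaIntegral p q = ((∫ y in (0:ℝ)..1, y ^ (p - 1) * (1 - y) ^ (q - 1) : ℝ) : ℂ) := by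
  rw [Complex.betaIntegral, ← intervalIntegral.integral_ofReal]
  refine intervalIntegral.integral_congr fun y hy => ?_
  rw [uIcc_of_le zero_le_one] at hy
  push_cast
  rw [Complex.ofReal_cpow hy.1, Complex.ofReal_cpow (sub_nonneg.2 hy.2)]
  push_cast
  rfl

theorem integral_rpow_mul_one_sub_rpow_s10 {p q : ℝ} (hp : 0 < p) (hq : 0 < q) :
    ∫ y in (0:ℝ)..1, y ^ (p - 1) * (1 - y) ^ (q - 1) = beta p q := by
  rw [beta_eq_betaIntegralReal p q hp hq, betaIntegral_ofReal, Complex.ofReal_re]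

theorem tendsto_integral_of_tendsto_left {E ι : Type*} [NormedAddCommGroup E] [NormedSpace ℝ E]
    {f : ℝ → E} {a b : ℝ} {l : Filter ι} {g : ι → ℝ} (hf : IntervalIntegrable f volume a b)
    (hg : Tendsto g l (𝓝[uIcc a b] a)) :
    Tendsto (fun i => ∫ y in g i..b, f y) l (𝓝 (∫ y in a..b, f y)) :=
  ((intervalIntegral.continuousOn_primitive_interval_left
    ((intervalIntegrable_iff' (f := f)).1 hf)).continuousWithinAt left_mem_uIcc).tendsto.comp hg

theorem tendsto_integral_one_div_one_add_atTop_s10 {p q : ℝ} (hp : 0 < p) (hq : 0 < q) :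
    Tendsto (fun θ : ℝ => ∫ y in (1 / (1 + θ))..1, y ^ (p - 1) * (1 - y) ^ (q - 1)) atTop
      (𝓝 (beta p q)) := by
  have hB := integral_rpow_mul_one_sub_rpow_s10 hp hq
  have hshrink : Tendsto (fun θ : ℝ => 1 / (1 + θ)) atTop (𝓝[uIcc 0 1] 0) := by
    refine tendsto_nhdsWithin_iff.2 ⟨?_, ?_⟩
    · exact tendsto_const_nhds.div_atTop (tendsto_atTop_add_const_left _ 1 tendsto_id)
    · filter_upwards [eventually_ge_atTop (0:ℝ)] with θ hθ
      rw [uIcc_of_le zero_le_one]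
      exact ⟨by positivity, div_le_one_of_le₀ (by linarith) (by linarith)⟩
  rw [← hB]
  exact tendsto_integral_of_tendsto_left
    (intervalIntegral.intervalIntegrable_of_integral_ne_zero (hB ▸ (beta_pos hp hq).ne')) hshrink

lemma C1_eq_rpow_mul {δ θ : ℝ} (hθ : 0 < θ) (m : ℕ) :
    C1 δ θ m = θ ^ δ * (θ ^ (-δ) * (1 + θ) ^ (-(m : ℝ)) +
      m * ∫ y in (1 / (1 + θ))..1, y ^ ((m : ℝ) + δ - 1) * (1 - y) ^ (-δ)) := by
  rw [C1, mul_add, ← mul_assoc, ← rpow_add hθ, add_neg_cancel, rpow_zero, one_mul]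
  ring

theorem tendsto_rpow_div_C1 {δ : ℝ} (hδ : δ ∈ Ioo (0:ℝ) 1) {m : ℕ} (hm : 0 < m) :
    Tendsto (fun θ : ℝ => θ ^ δ / C1 δ θ m) atTop
      (𝓝 (Gamma m / (Gamma (1 - δ) * Gamma (m + δ)))) := by
  obtain ⟨hδ0, hδ1⟩ := hδ
  have hm0 : (0:ℝ) < m := Nat.cast_pos.2 hm
  have hp : 0 < (m:ℝ) + δ := by positivity
  have hq : 0 < 1 - δ := sub_pos.2 hδ1
  have hint := tendsto_integral_one_div_one_add_atTop_s10 hp hq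
  simp only [sub_sub_cancel_left] at hint
  have hden : Tendsto (fun θ : ℝ => θ ^ (-δ) * (1 + θ) ^ (-(m : ℝ)) +
      m * ∫ y in (1 / (1 + θ))..1, y ^ ((m : ℝ) + δ - 1) * (1 - y) ^ (-δ)) atTop
      (𝓝 (m * beta (m + δ) (1 - δ))) := by
    simpa using ((tendsto_rpow_neg_atTop hδ0).mul ((tendsto_rpow_neg_atTop hm0).comp
      (tendsto_atTop_add_const_left _ 1 tendsto_id))).add (hint.const_mul (m : ℝ))
  have hlim : (m * beta (m + δ) (1 - δ))⁻¹ = Gamma m / (Gamma (1 - δ) * Gamma (m + δ)) := by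
    rw [beta, add_add_sub_cancel, Gamma_add_one hm0.ne']
    have hΓp := Gamma_pos_of_pos hp
    have hΓq := Gamma_pos_of_pos hq
    field_simp
  rw [← hlim]
  refine (hden.inv₀ (mul_pos hm0 (beta_pos hp hq)).ne').congr' ?_
  filter_upwards [eventually_gt_atTop 0] with θ hθ
  rw [C1_eq_rpow_mul hθ, div_mul_cancel_left₀ (rpow_pos_of_pos hθ δ).ne']

theorem stmt_10_general (δ : ℝ) (M : ℕ) (hδ : δ ∈ Set.Ioo (0:ℝ) 1) :
    Tendsto
      (fun θ : ℝ =>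
        θ ^ δ * ∑ m ∈ Finset.Icc 1 M, (-1 : ℝ) ^ (m + 1) * (M.choose m : ℝ) / C1 δ θ m)
      atTop
      (nhds (∑ m ∈ Finset.Icc 1 M,
        (-1 : ℝ) ^ (m + 1) * (M.choose m : ℝ) * Real.Gamma m /
          (Real.Gamma (1 - δ) * Real.Gamma (m + δ)))) := by
  simp_rw [Finset.mul_sum]
  refine tendsto_finsetSum _ fun m hm => ?_
  convert (tendsto_rpow_div_C1 hδ (Finset.mem_Icc.1 hm).1).const_mul
    ((-1 : ℝ) ^ (m + 1) * M.choose m) using 1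
  · ext θ
    ring
  · rw [mul_div_assoc]

/-- High-spectral-efficiency asymptotics of the coverage probability under `M`-RB
selection combining: with `P(θ) := Σ_{m=1}^M (−1)^{m+1} (M choose m) / C₁(θ,m)`,
`lim_{θ→∞} θ^δ P(θ) = b_M := Σ_{m=1}^M (−1)^{m+1} (M choose m) Γ(m)/(Γ(1−δ)Γ(m+δ))`. -/
theorem stmt_10 (δ : ℝ) (M : ℕ) (hδ : δ ∈ Set.Ioo (0:ℝ) 1) (hM : 0 < M) :
    Tendsto
      (fun θ : ℝ =>
        θ ^ δ * ∑ m ∈ Finset.Icc 1 M, (-1 : ℝ) ^ (m + 1) * (M.choose m : ℝ) / C1 δ θ m)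
      atTop
      (nhds (∑ m ∈ Finset.Icc 1 M,
        (-1 : ℝ) ^ (m + 1) * (M.choose m : ℝ) * Real.Gamma m /
          (Real.Gamma (1 - δ) * Real.Gamma (m + δ)))) :=
  stmt_10_general δ M hδ
end

section
/- Let c be a nonzero real number, M a nonnegative integer and k a nonnegative integer. Then the k-th derivative at u = 0 of the function u ↦ (1 − 1/(c(1+u)))^M (defined on a neighborhood of 0 where 1+u ≠ 0) equals Σ_{j=0}^{k} (M choose j) (k choose j) j! (M)_{k−j} (−1)^{k−j} (1 − 1/c)^{M−j}, where (x)_n := x(x+1)⋯(x+n−1) is the rising factorial with (x)_0 := 1 and (M choose j) := 0 for j > M. -/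
/-!
Writing `a = 1/c`, near `u = 0` we have `1 - a/(1+u) = (u + (1 - a)) * (1+u)⁻¹`, so the function is
`(u + (1 - a))^M * (1+u)^(-M)`. Both factors have explicit iterated derivatives: the `j`-th one
of the first at `0` is `M(M-1)⋯(M-j+1) (1-a)^(M-j)`, and the `i`-th one of the second is
`(-1)^i (M)_i`. The Leibniz rule then gives the formula.
-/

open Real Set

noncomputable def risingFac (x : ℝ) (n : ℕ) : ℝ := ∏ i ∈ Finset.range n, (x + i)

open Filter Topology

section

variable {𝕜 : Type*} [NontriviallyNormedField 𝕜]

theorem iteratedDeriv_add_const_pow (M j : ℕ) (s t : 𝕜) :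
    iteratedDeriv j (fun u => (u + s) ^ M) t = M.descFactorial j * (t + s) ^ (M - j) := by
  rw [congrFun (iteratedDeriv_comp_add_const j (· ^ M) s) t, iteratedDeriv_pow]

theorem iteratedDeriv_const_add_zpow (m : ℤ) (i : ℕ) (s t : 𝕜) :
    iteratedDeriv i (fun u => (s + u) ^ m) t =
      (∏ l ∈ Finset.range i, ((m : 𝕜) - l)) * (s + t) ^ (m - i) := by
  rw [congrFun (iteratedDeriv_comp_const_add i (· ^ m) s) t, iteratedDeriv_eq_iterate,
    iter_deriv_zpow]

end

theorem prod_range_neg_natCast_sub (M n : ℕ) :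
    ∏ l ∈ Finset.range n, (((-M : ℤ) : ℝ) - l) = (-1) ^ n * risingFac M n := by
  have h := Finset.prod_neg (s := Finset.range n) fun l : ℕ => (M : ℝ) + l
  rw [Finset.card_range] at h
  rw [risingFac, ← h]
  refine Finset.prod_congr rfl fun l _ => ?_
  push_cast
  ring

theorem iteratedDeriv_one_sub_div_one_add_pow_zero (a : ℝ) (M k : ℕ) :
    iteratedDeriv k (fun u : ℝ => (1 - a / (1 + u)) ^ M) 0 =
      ∑ j ∈ Finset.range (k + 1), (k.choose j : ℝ) * (M.descFactorial j * (1 - a) ^ (M - j)) *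
        ((-1) ^ (k - j) * risingFac M (k - j)) := by
  have hfactor : (fun u : ℝ => (1 - a / (1 + u)) ^ M) =ᶠ[𝓝 0]
      fun u => (u + (1 - a)) ^ M * ((1 + u) ^ M)⁻¹ := by
    filter_upwards [((continuous_const_add (1 : ℝ)).continuousAt (x := 0)).eventually_ne
      (y := 0) (by norm_num)] with u hu
    rw [← inv_pow, ← mul_pow]
    congr 1
    field_simp
    ring
  have hG : ContDiffAt ℝ k (fun u : ℝ => (u + (1 - a)) ^ M) 0 := by fun_prop
  have hH : ContDiffAt ℝ k (fun u : ℝ => ((1 + u) ^ M)⁻¹) 0 := by fun_prop (disch := norm_num)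
  have hH_zpow : (fun u : ℝ => ((1 + u) ^ M)⁻¹) = fun u => (1 + u) ^ (-(M : ℤ)) := by
    simp [zpow_neg]
  rw [hfactor.iteratedDeriv_eq, iteratedDeriv_fun_mul hG hH, hH_zpow]
  refine Finset.sum_congr rfl fun j _ => ?_
  rw [iteratedDeriv_add_const_pow, iteratedDeriv_const_add_zpow, prod_range_neg_natCast_sub]
  simp only [zero_add, add_zero, one_zpow, mul_one]

theorem stmt_12_general (c : ℝ) (M k : ℕ) :
    iteratedDeriv k (fun u : ℝ => (1 - 1 / (c * (1 + u))) ^ M) 0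
      = ∑ j ∈ Finset.range (k + 1),
          (M.choose j : ℝ) * (k.choose j : ℝ) * (j.factorial : ℝ) *
            risingFac (M : ℝ) (k - j) * (-1) ^ (k - j) * (1 - 1 / c) ^ (M - j) := by
  simp_rw [← div_div]
  rw [iteratedDeriv_one_sub_div_one_add_pow_zero]
  refine Finset.sum_congr rfl fun j _ => ?_
  rw [Nat.descFactorial_eq_factorial_mul_choose]
  push_cast
  ring

/-- For a nonzero real `c` and nonnegative integers `M`, `k`, the `k`-th derivative at
`u = 0` of `u ↦ (1 − 1/(c(1+u)))^M` equals
`Σ_{j=0}^{k} (M choose j) (k choose j) j! (M)_{k−j} (−1)^{k−j} (1 − 1/c)^{M−j}`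
(with `(M choose j) = 0` for `j > M`). -/
theorem stmt_12 (c : ℝ) (hc : c ≠ 0) (M k : ℕ) :
    iteratedDeriv k (fun u : ℝ => (1 - 1 / (c * (1 + u))) ^ M) 0
      = ∑ j ∈ Finset.range (k + 1),
          (M.choose j : ℝ) * (k.choose j : ℝ) * (j.factorial : ℝ) *
            risingFac (M : ℝ) (k - j) * (-1) ^ (k - j) * (1 - 1 / c) ^ (M - j) :=
  stmt_12_general c M k
end

section
/- Let M and n be positive integers and let k_1, …, k_n be nonnegative integers with A := Σ_{i=1}^n k_i satisfying 1 ≤ A ≤ M. Then Σ_{m=1}^{M} (M choose m) (−1)^{m+A} Π_{i=1}^n (m)_{k_i} equals 0 if A < M, and equals M! if A = M, where (x)_j := x(x+1)⋯(x+j−1) is the rising factorial with (x)_0 := 1. -/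
open Real Set

/-! The product `P = ∏ᵢ (X)_{kᵢ}` of Pochhammer polynomials is monic of degree `A`, and `P(0) = 0`
since `A ≥ 1`. Up to the sign `(-1)^(M+A)` the sum is therefore the `M`-th forward difference
`Δ^M P (0) = ∑_{m ≤ M} (-1)^(M-m) C(M,m) P(m)`, which for `deg P ≤ M` equals `M!` times the
coefficient of `X^M` in `P`: this is `0` when `A < M` and `1` when `A = M`. -/

open Finset Polynomial
open scoped Nat

theorem risingFac_eq_eval_ascPochhammer (x : ℝ) (j : ℕ) :
    risingFac x j = (ascPochhammer ℝ j).eval x := by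
  induction j with
  | zero => simp [risingFac]
  | succ j ih => rw [risingFac, prod_range_succ, ← risingFac, ih, ascPochhammer_succ_eval]

theorem sum_range_neg_one_pow_mul_choose_mul_eval {R : Type*} [CommRing R] (P : R[X]) {M : ℕ}
    (hP : P.natDegree ≤ M) :
    ∑ m ∈ range (M + 1), (-1) ^ (M - m) * (M.choose m : R) * P.eval (m : R) =
      M ! * P.coeff M := by
  have hshift := fwdDiff_iter_eq_sum_shift 1 P.eval M 0
  simp only [zero_add, nsmul_one, zsmul_eq_mul] at hshift
  push_cast at hshift
  rw [← hshift]
  rcases hP.lt_or_eq with hlt | rfl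
  · rw [fwdDiff_iter_eq_zero_of_degree_lt hlt, coeff_eq_zero_of_natDegree_lt hlt]
    simp
  · rw [fwdDiff_iter_degree_eq_factorial, Pi.smul_apply, Pi.natCast_apply, smul_eq_mul, mul_comm,
      leadingCoeff]

theorem monic_prod_ascPochhammer {ι R : Type*} [Fintype ι] [CommSemiring R] [Nontrivial R]
    [NoZeroDivisors R] (k : ι → ℕ) : (∏ i, ascPochhammer R (k i)).Monic :=
  monic_prod_of_monic _ _ fun i _ => monic_ascPochhammer R (k i)

theorem natDegree_prod_ascPochhammer {ι R : Type*} [Fintype ι] [CommSemiring R] [Nontrivial R]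
    [NoZeroDivisors R] (k : ι → ℕ) : (∏ i, ascPochhammer R (k i)).natDegree = ∑ i, k i := by
  rw [natDegree_prod_of_monic _ _ fun i _ => monic_ascPochhammer R (k i)]
  simp [ascPochhammer_natDegree]

theorem eval_zero_prod_ascPochhammer {ι R : Type*} [Fintype ι] [CommSemiring R] (k : ι → ℕ)
    (hk : ∑ i, k i ≠ 0) : (∏ i, ascPochhammer R (k i)).eval 0 = 0 := by
  obtain ⟨i, -, hi⟩ := exists_ne_zero_of_sum_ne_zero hk
  rw [eval_prod]
  exact prod_eq_zero (mem_univ i) (ascPochhammer_ne_zero_eval_zero _ hi)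

theorem sum_Icc_choose_mul_neg_one_pow_mul_prod_risingFac {ι : Type*} [Fintype ι] (k : ι → ℕ)
    {M : ℕ} (hA1 : 1 ≤ ∑ i, k i) (hA2 : ∑ i, k i ≤ M) :
    ∑ m ∈ Finset.Icc 1 M, (M.choose m : ℝ) * (-1) ^ (m + ∑ i, k i) * ∏ i, risingFac m (k i) =
      (-1) ^ (M + ∑ i, k i) * M ! * (∏ i, ascPochhammer ℝ (k i)).coeff M := by
  set A := ∑ i, k i
  set P := ∏ i, ascPochhammer ℝ (k i)
  have heval (x : ℝ) : ∏ i, risingFac x (k i) = P.eval x := by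
    simp only [P, eval_prod, risingFac_eq_eval_ascPochhammer]
  have hsign {m : ℕ} (hm : m ≤ M) : (-1 : ℝ) ^ (m + A) = (-1) ^ (M + A) * (-1) ^ (M - m) := by
    rw [← pow_add, show M + A + (M - m) = m + A + 2 * (M - m) by omega, pow_add _ (m + A),
      pow_mul]
    simp
  have hdeg : P.natDegree ≤ M := (natDegree_prod_ascPochhammer k).trans_le hA2
  rw [mul_assoc, ← sum_range_neg_one_pow_mul_choose_mul_eval P hdeg,
    sum_range_eq_add_Ico _ (by omega : 0 < M + 1), Nat.cast_zero,
    eval_zero_prod_ascPochhammer k (by omega), mul_zero, zero_add,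
    Finset.Ico_add_one_right_eq_Icc, mul_sum]
  refine sum_congr rfl fun m hm => ?_
  rw [hsign (mem_Icc.1 hm).2, heval]
  ring

theorem stmt_13_general (M n : ℕ) (k : Fin n → ℕ)
    (hA1 : 1 ≤ ∑ i, k i) (hA2 : ∑ i, k i ≤ M) :
    ((∑ i, k i) < M →
      (∑ m ∈ Finset.Icc 1 M,
        (M.choose m : ℝ) * (-1) ^ (m + ∑ i, k i) * ∏ i, risingFac (m : ℝ) (k i)) = 0) ∧
    ((∑ i, k i) = M →
      (∑ m ∈ Finset.Icc 1 M,
        (M.choose m : ℝ) * (-1) ^ (m + ∑ i, k i) * ∏ i, risingFac (m : ℝ) (k i))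
        = (M.factorial : ℝ)) := by
  rw [sum_Icc_choose_mul_neg_one_pow_mul_prod_risingFac k hA1 hA2]
  refine ⟨fun hlt => ?_, fun heq => ?_⟩
  · rw [coeff_eq_zero_of_natDegree_lt ((natDegree_prod_ascPochhammer k).trans_lt hlt)]
    simp
  · have hlead := (monic_prod_ascPochhammer (R := ℝ) k).coeff_natDegree
    rw [natDegree_prod_ascPochhammer, heq] at hlead
    rw [hlead, heq, ← two_mul, pow_mul]
    simp

/-- For positive integers `M`, `n` and nonnegative integers `k_1,…,k_n` with
`1 ≤ A := Σ_i k_i ≤ M`, the sum `Σ_{m=1}^{M} (M choose m) (−1)^{m+A} Π_i (m)_{k_i}`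
equals `0` if `A < M` and equals `M!` if `A = M`. -/
theorem stmt_13 (M n : ℕ) (hM : 0 < M) (hn : 0 < n) (k : Fin n → ℕ)
    (hA1 : 1 ≤ ∑ i, k i) (hA2 : ∑ i, k i ≤ M) :
    ((∑ i, k i) < M →
      (∑ m ∈ Finset.Icc 1 M,
        (M.choose m : ℝ) * (-1) ^ (m + ∑ i, k i) * ∏ i, risingFac (m : ℝ) (k i)) = 0) ∧
    ((∑ i, k i) = M →
      (∑ m ∈ Finset.Icc 1 M,
        (M.choose m : ℝ) * (-1) ^ (m + ∑ i, k i) * ∏ i, risingFac (m : ℝ) (k i))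
        = (M.factorial : ℝ)) :=
  stmt_13_general M n k hA1 hA2
end
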